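/- Let (G,f) = der_θ(G,·) with θ^{n-1} = id. For Λ ∈ Aut(G,f) with u = Λ(e), define Λ* : ℤ_{n-1} × G → ℤ_{n-1} × G by Λ*(i,x) = (i, Λ(x)·δ(i,u)) where δ(i,u) = θ(u)···θ^i(u). Then Λ* is an automorphism of the Post cover G*_e, and the map Λ ↦ Λ* is an injective group homomorphism from Aut(G,f) into Aut(G*_e). -/
import Mathlib

/-- The `n`-ary operation of `der_θ(G,·)`. -/
def derF {G : Type*} [Group G] (n : ℕ) (θ : MulAut G) (x : Fin n → G) : G :=
  (List.ofFn fun i : Fin n => (θ ^ (i : ℕ)) (x i)).prod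

/-- `Λ` is an automorphism of the `n`-ary group `(G,f) = der_θ(G,·)`. -/
def IsPolyAut {G : Type*} [Group G] (n : ℕ) (θ : MulAut G) (Λ : G → G) : Prop :=
  Function.Bijective Λ ∧ ∀ x : Fin n → G, Λ (derF n θ x) = derF n θ (fun i => Λ (x i))

/-- Multiplication of the Post cover `G*_e`: `(i,x) ∗ (j,y) = (i+j+1, x·θ^{i+1}(y))`. -/
def postMul {G : Type*} [Group G] (n : ℕ) (θ : MulAut G) (p q : ZMod (n - 1) × G) :
    ZMod (n - 1) × G :=
  (p.1 + q.1 + 1, p.2 * (θ ^ (p.1.val + 1)) q.2)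

/-- `δ(i,u) = θ(u)·θ²(u)⋯θ^i(u)`. -/
def delta {G : Type*} [Group G] (θ : MulAut G) (k : ℕ) (u : G) : G :=
  (List.ofFn fun t : Fin k => (θ ^ ((t : ℕ) + 1)) u).prod

/-- For `Λ ∈ Aut(G,f)` with `u = Λ(e)`, `Λ*(i,x) = (i, Λ(x)·δ(i,u))`. -/
def starAut {G : Type*} [Group G] (n : ℕ) (θ : MulAut G) (Λ : G → G)
    (p : ZMod (n - 1) × G) : ZMod (n - 1) × G :=
  (p.1, Λ p.2 * delta θ p.1.val (Λ 1))

section StarEmbeddingAux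

variable {G : Type*} [Group G]

lemma pow_apply_pow (θ : MulAut G) (a b : ℕ) (x : G) :
    (θ ^ a) ((θ ^ b) x) = (θ ^ (a + b)) x := by
  rw [← MulAut.mul_apply, ← pow_add]

lemma pow_apply_base (θ : MulAut G) (a : ℕ) (z : G) :
    (θ ^ a) (θ z) = (θ ^ (a + 1)) z := by
  rw [pow_succ, MulAut.mul_apply]

lemma delta_zero (θ : MulAut G) (u : G) : delta θ 0 u = 1 := by
  simp [delta]

lemma pow_base_apply (θ : MulAut G) (a : ℕ) (z : G) :
    θ ((θ ^ a) z) = (θ ^ (a + 1)) z := by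
  rw [pow_succ', MulAut.mul_apply]

lemma delta_one_arg (θ : MulAut G) (k : ℕ) : delta θ k (1 : G) = 1 := by
  simp [delta]

lemma delta_succ (θ : MulAut G) (k : ℕ) (u : G) :
    delta θ (k + 1) u = delta θ k u * (θ ^ (k + 1)) u := by
  rw [delta, List.ofFn_succ', List.concat_eq_append, List.prod_append]
  simp [delta]

lemma theta_delta (θ : MulAut G) (k : ℕ) (u : G) :
    θ (delta θ k u) = (List.ofFn fun t : Fin k => (θ ^ ((t : ℕ) + 2)) u).prod := by
  rw [delta, map_list_prod, List.map_ofFn]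
  exact congrArg List.prod (congrArg List.ofFn (funext fun t => by
    simp [Function.comp, pow_base_apply]))

lemma delta_succ' (θ : MulAut G) (k : ℕ) (u : G) :
    delta θ (k + 1) u = θ u * θ (delta θ k u) := by
  rw [delta, List.ofFn_succ, List.prod_cons, theta_delta]
  simp only [Fin.val_zero, zero_add, pow_one, Fin.val_succ]

lemma delta_add (θ : MulAut G) (a b : ℕ) (u : G) :
    delta θ (a + b) u = delta θ a u * (θ ^ a) (delta θ b u) := by
  induction b with
  | zero => simp [delta_zero]
  | succ b ih =>
      rw [← Nat.add_assoc, delta_succ, ih, delta_succ, map_mul, mul_assoc,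
        pow_apply_pow, Nat.add_assoc]

lemma derF_end (m : ℕ) (θ : MulAut G) (v : Fin (m + 2) → G) (c : G)
    (h : ∀ i : Fin m, v i.castSucc.succ = c) :
    derF (m + 2) θ v = v 0 * delta θ m c * (θ ^ (m + 1)) (v (Fin.last (m + 1))) := by
  rw [derF, List.ofFn_succ, List.prod_cons, List.ofFn_succ', List.concat_eq_append,
    List.prod_append, List.prod_singleton]
  simp only [Fin.val_zero, pow_zero, MulAut.one_apply, Fin.val_succ, Fin.coe_castSucc,
    Fin.succ_last, Fin.val_last]
  rw [mul_assoc]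
  congr 2
  · rw [delta]
    refine congrArg List.prod (congrArg List.ofFn (funext fun t => ?_))
    rw [h t]

lemma derF_two (m : ℕ) (θ : MulAut G) (v : Fin (m + 2) → G) (c : G)
    (h : ∀ i : Fin m, v i.succ.succ = c) :
    derF (m + 2) θ v = v 0 * θ (v 1) * (θ ^ 1) (delta θ m c) := by
  rw [derF, List.ofFn_succ, List.prod_cons, List.ofFn_succ, List.prod_cons]
  simp only [Fin.val_zero, pow_zero, MulAut.one_apply, Fin.val_succ, Fin.succ_zero_eq_one,
    zero_add, pow_one]
  rw [mul_assoc]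
  congr 2
  rw [delta, map_list_prod, List.map_ofFn]
  refine congrArg List.prod (congrArg List.ofFn (funext fun t => ?_))
  simp only [Function.comp_apply, h t]
  rw [← MulAut.mul_apply, ← pow_succ']

section Core
variable {m : ℕ} {θ : MulAut G} {Λ : G → G}

lemma FA0 (hθ : θ ^ (m + 1) = 1) (hΛ : IsPolyAut (m + 2) θ Λ) (a b : G) :
    Λ (a * b) = Λ a * delta θ m (Λ 1) * Λ b := by
  set v : Fin (m + 2) → G := fun i => if i = 0 then a else if i = Fin.last (m + 1) then b else 1
    with hv
  have hmid : ∀ i : Fin m, v i.castSucc.succ = 1 := by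
    intro i
    rw [hv]
    have h1 : i.castSucc.succ ≠ 0 := Fin.succ_ne_zero _
    have h2 : i.castSucc.succ ≠ Fin.last (m + 1) := by
      rw [← Fin.succ_last]
      exact fun hc => absurd (Fin.succ_injective _ hc) (ne_of_lt (Fin.castSucc_lt_last i))
    simp [h1, h2]
  have hmid' : ∀ i : Fin m, Λ (v i.castSucc.succ) = Λ 1 := fun i => by rw [hmid i]
  have h2 := hΛ.2 v
  rw [derF_end m θ v 1 hmid, derF_end m θ (fun i => Λ (v i)) (Λ 1) hmid'] at h2
  have hv0 : v 0 = a := by simp [hv]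
  have hvl : v (Fin.last (m + 1)) = b := by
    have : (Fin.last (m + 1)) ≠ 0 := by
      simp [Fin.ext_iff]
    simp [hv, this]
  rw [hv0, hvl, delta_one_arg, mul_one, hθ] at h2
  simpa using h2

lemma delta_m_eq (hθ : θ ^ (m + 1) = 1) (hΛ : IsPolyAut (m + 2) θ Λ) :
    delta θ m (Λ 1) = (Λ 1)⁻¹ := by
  have := FA0 hθ hΛ 1 1
  rw [mul_one] at this
  have h : Λ 1 * (delta θ m (Λ 1) * Λ 1) = Λ 1 * ((Λ 1)⁻¹ * Λ 1) := by
    rw [inv_mul_cancel, mul_one, ← mul_assoc, ← this]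
  have := mul_left_cancel h
  exact mul_right_cancel this

lemma lam_mul (hθ : θ ^ (m + 1) = 1) (hΛ : IsPolyAut (m + 2) θ Λ) (a b : G) :
    Λ (a * b) = Λ a * (Λ 1)⁻¹ * Λ b := by
  rw [FA0 hθ hΛ a b, delta_m_eq hθ hΛ]

lemma lam_theta (hθ : θ ^ (m + 1) = 1) (hΛ : IsPolyAut (m + 2) θ Λ) (y : G) :
    Λ (θ y) = Λ 1 * θ (Λ y) * (θ (Λ 1))⁻¹ := by
  set v : Fin (m + 2) → G := fun i => if i = 1 then y else 1 with hv
  have hmid : ∀ i : Fin m, v i.succ.succ = 1 := by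
    intro i
    have : i.succ.succ ≠ (1 : Fin (m + 2)) := by
      intro hc
      have := congrArg Fin.val hc
      simp [Fin.val_succ] at this
    simp [hv, this]
  have hmid' : ∀ i : Fin m, Λ (v i.succ.succ) = Λ 1 := fun i => by rw [hmid i]
  have h2 := hΛ.2 v
  rw [derF_two m θ v 1 hmid, derF_two m θ (fun i => Λ (v i)) (Λ 1) hmid'] at h2
  have hv0 : v 0 = 1 := by
    have : (0 : Fin (m + 2)) ≠ 1 := by
      intro hc
      have := congrArg Fin.val hc
      simp at this
    simp [hv, this]
  have hv1 : v 1 = y := by simp [hv]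
  rw [hv0, hv1, delta_one_arg, map_one, mul_one, one_mul, pow_one,
    delta_m_eq hθ hΛ, map_inv] at h2
  exact h2

lemma lam_conj (hθ : θ ^ (m + 1) = 1) (hΛ : IsPolyAut (m + 2) θ Λ) (k : ℕ) (y : G) :
    (Λ 1)⁻¹ * Λ ((θ ^ (k + 1)) y) * delta θ k (Λ 1) * (θ ^ (k + 1)) (Λ 1) =
      delta θ k (Λ 1) * (θ ^ (k + 1)) (Λ y) := by
  induction k generalizing y with
  | zero =>
      rw [delta_zero, pow_one, lam_theta hθ hΛ y]
      group
  | succ k ih =>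
      have ihy := ih (θ y)
      rw [pow_apply_base θ (k + 1) y] at ihy
      have hx : Λ ((θ ^ (k + 1 + 1)) y) =
          Λ 1 * (((Λ 1)⁻¹ * Λ ((θ ^ (k + 1 + 1)) y) * delta θ k (Λ 1) * (θ ^ (k + 1)) (Λ 1)) *
            ((θ ^ (k + 1)) (Λ 1))⁻¹ * (delta θ k (Λ 1))⁻¹) := by
        group
      rw [ihy] at hx
      rw [hx, lam_theta hθ hΛ y, delta_succ]
      simp only [map_mul, map_inv, pow_apply_base]
      group

lemma delta_period (hθ : θ ^ (m + 1) = 1) (hΛ : IsPolyAut (m + 2) θ Λ) :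
    delta θ (m + 1) (Λ 1) = 1 := by
  rw [delta_succ, delta_m_eq hθ hΛ, hθ, MulAut.one_apply, inv_mul_cancel]

lemma delta_mul_period {M : ℕ} {u : G} (hper : delta θ M u = 1) (q : ℕ) :
    delta θ (M * q) u = 1 := by
  induction q with
  | zero => rw [Nat.mul_zero, delta_zero]
  | succ q ih => rw [Nat.mul_succ, delta_add, ih, hper, map_one, mul_one]

lemma delta_mod {M : ℕ} {u : G} (hper : delta θ M u = 1) (j : ℕ) :
    delta θ j u = delta θ (j % M) u := by
  conv_lhs => rw [← Nat.mod_add_div j M]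
  rw [delta_add, delta_mul_period hper, map_one, mul_one]

lemma claimH {Λ₁ Λ₂ : G → G} (hθ : θ ^ (m + 1) = 1) (h1 : IsPolyAut (m + 2) θ Λ₁)
    (h2 : IsPolyAut (m + 2) θ Λ₂) (k : ℕ) :
    delta θ k (Λ₁ (Λ₂ 1)) = (Λ₁ 1)⁻¹ * Λ₁ (delta θ k (Λ₂ 1)) * delta θ k (Λ₁ 1) := by
  induction k with
  | zero => rw [delta_zero, delta_zero, delta_zero, mul_one, inv_mul_cancel]
  | succ k ih =>
      have key := lam_conj hθ h1 k (Λ₂ 1)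
      have key2 : Λ₁ ((θ ^ (k + 1)) (Λ₂ 1)) =
          Λ₁ 1 * (delta θ k (Λ₁ 1) * (θ ^ (k + 1)) (Λ₁ (Λ₂ 1)) * ((θ ^ (k + 1)) (Λ₁ 1))⁻¹ *
            (delta θ k (Λ₁ 1))⁻¹) := by
        rw [← key]
        group
      rw [delta_succ, delta_succ, delta_succ, ih, lam_mul hθ h1, key2]
      group

end Core

end StarEmbeddingAux

/-- Let `(G,f) = der_θ(G,·)` with `θ^{n-1} = id`.  For each `Λ ∈ Aut(G,f)` the map
`Λ*(i,x) = (i, Λ(x)·δ(i,u))` (where `u = Λ(e)`) is an automorphism of the Post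
cover `G*_e`, and `Λ ↦ Λ*` is an injective group homomorphism of `Aut(G,f)` into
`Aut(G*_e)`. -/

theorem star_embedding {G : Type*} [Group G] (n : ℕ) (hn : 2 ≤ n)
    (θ : MulAut G) (hθ : θ ^ (n - 1) = 1) :
    (∀ Λ : G → G, IsPolyAut n θ Λ →
      Function.Bijective (starAut n θ Λ) ∧
        ∀ p q : ZMod (n - 1) × G,
          starAut n θ Λ (postMul n θ p q) = postMul n θ (starAut n θ Λ p) (starAut n θ Λ q)) ∧
    (∀ Λ₁ Λ₂ : G → G, IsPolyAut n θ Λ₁ → IsPolyAut n θ Λ₂ →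
      starAut n θ (Λ₁ ∘ Λ₂) = starAut n θ Λ₁ ∘ starAut n θ Λ₂) ∧
    (∀ Λ₁ Λ₂ : G → G, IsPolyAut n θ Λ₁ → IsPolyAut n θ Λ₂ →
      starAut n θ Λ₁ = starAut n θ Λ₂ → Λ₁ = Λ₂) := by
  obtain ⟨m, rfl⟩ : ∃ m, n = m + 2 := ⟨n - 2, by omega⟩
  have hsub : m + 2 - 1 = m + 1 := rfl
  simp only [hsub] at hθ
  haveI : NeZero (m + 2 - 1) := ⟨by omega⟩
  refine ⟨?_, ?_, ?_⟩
  · intro Λ hΛ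
    have hper : delta θ (m + 2 - 1) (Λ 1) = 1 := delta_period hθ hΛ
    constructor
    · constructor
      · intro p q hpq
        have h1 := congrArg Prod.fst hpq
        have h2 := congrArg Prod.snd hpq
        simp only [starAut] at h1 h2
        rw [h1] at h2
        exact Prod.ext h1 (hΛ.1.injective (mul_right_cancel h2))
      · intro z
        obtain ⟨x, hx⟩ := hΛ.1.surjective (z.2 * (delta θ z.1.val (Λ 1))⁻¹)
        exact ⟨(z.1, x), by simp [starAut, hx]⟩
    · intro p q
      simp only [starAut, postMul, Prod.mk.injEq]
      refine ⟨trivial, ?_⟩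
      have hval : delta θ ((p.1 + q.1 + 1).val) (Λ 1) =
          delta θ (p.1.val + q.1.val + 1) (Λ 1) := by
        rw [delta_mod hper, delta_mod hper (p.1.val + q.1.val + 1)]
        congr 1
        rw [ZMod.val_add, ZMod.val_add, ZMod.val_one_eq_one_mod, ← Nat.add_mod,
          Nat.mod_mod_of_dvd _ dvd_rfl]
      have hsplit : delta θ (p.1.val + q.1.val + 1) (Λ 1) =
          delta θ p.1.val (Λ 1) *
            ((θ ^ (p.1.val + 1)) (Λ 1) * (θ ^ (p.1.val + 1)) (delta θ q.1.val (Λ 1))) := by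
        have hadd : p.1.val + q.1.val + 1 = p.1.val + (q.1.val + 1) := by omega
        rw [hadd, delta_add, delta_succ', map_mul, pow_apply_base, pow_apply_base]
      have key := lam_conj hθ hΛ p.1.val q.2
      have key2 : Λ ((θ ^ (p.1.val + 1)) q.2) =
          Λ 1 * (delta θ p.1.val (Λ 1) * (θ ^ (p.1.val + 1)) (Λ q.2) *
            ((θ ^ (p.1.val + 1)) (Λ 1))⁻¹ * (delta θ p.1.val (Λ 1))⁻¹) := by
        rw [← key]
        group
      rw [hval, hsplit, lam_mul hθ hΛ, key2, map_mul]
      group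
  · intro Λ₁ Λ₂ h1 h2
    funext p
    simp only [starAut, Function.comp_apply, Prod.mk.injEq, Function.comp]
    refine ⟨trivial, ?_⟩
    rw [claimH hθ h1 h2, lam_mul hθ h1]
    group
  · intro Λ₁ Λ₂ h1 h2 heq
    funext x
    have hx := congrArg (fun f => (f ((0 : ZMod (m + 2 - 1)), x)).2) heq
    simp only [starAut] at hx
    rw [ZMod.val_zero, delta_zero, delta_zero, mul_one, mul_one] at hx
    exact hx
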